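/- Let ρ_{A₁B₁} = (1/μ_max) Σ_{μ,μ'} [(1/ν_max) Σ_ν |e_{μ'ν}⟩⟨e_{μν}|]_{A₁} ⊗ [(1/τ_max) Σ_τ |f_{μ'τ}⟩⟨f_{μτ}|]_{B₁}, where {|e_{μν}⟩} and {|f_{μτ}⟩} are orthonormal families doubly indexed by μ ∈ {1,…,μ_max}, ν ∈ {1,…,ν_max} (resp. τ ∈ {1,…,τ_max}). Then Tr|ρ_{A₁B₁}^{T_{A₁}}| = μ_max, i.e. the logarithmic negativity of ρ_{A₁B₁} is log₂ μ_max. -/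

import Mathlib

/-!
With `W (μ, ν) (μ', τ) = e_{μν} ⊗ f_{μ'τ}`, an orthonormal family, `R` is
`(μmax νmax τmax)⁻¹ ∑_p |W p⟩⟨W (σ p)|` where the involution `σ` swaps `μ` and `μ'`.
An operator permuting an orthonormal family by an involution is Hermitian and squares to the
projector `P` onto its span, so `|R| = (μmax νmax τmax)⁻¹ P`, whose trace is
`(μmax νmax τmax)⁻¹ · μmax² νmax τmax = μmax`.
-/

open scoped BigOperators Kronecker ComplexOrder
noncomputable section
open Matrix

/-- trace norm `Tr |X|` where `|X| = √(Xᴴ X)`. -/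
noncomputable def traceNorm {n : Type*} [Fintype n] [DecidableEq n] (X : Matrix n n ℂ) : ℝ :=
  (((Matrix.posSemidef_conjTranspose_mul_self X).1.eigenvectorUnitary.1 *
      diagonal (((↑) : ℝ → ℂ) ∘ Real.sqrt ∘ (Matrix.posSemidef_conjTranspose_mul_self X).1.eigenvalues) *
      (star (Matrix.posSemidef_conjTranspose_mul_self X).1.eigenvectorUnitary : Matrix n n ℂ)).trace).re

/-- outer product `|u⟩⟨v|`. -/
def outer {n : Type*} (u v : n → ℂ) : Matrix n n ℂ := fun i j => u i * star (v j)

/-- inner product `⟨u|v⟩`. -/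
def dotc {n : Type*} [Fintype n] (u v : n → ℂ) : ℂ := ∑ i, star (u i) * v i

/-- an orthonormal family of vectors. -/
def Orthonormal' {ι n : Type*} [Fintype n] [DecidableEq ι] (φ : ι → n → ℂ) : Prop :=
  ∀ i j, dotc (φ i) (φ j) = if i = j then 1 else 0

/-- tensor product of vectors `|u⟩ ⊗ |v⟩`. -/
def kvec {a b : Type*} (u : a → ℂ) (v : b → ℂ) : a × b → ℂ := fun p => u p.1 * v p.2

/-- rank-one projector `|ψ⟩⟨ψ|`. -/
def projv {n : Type*} (ψ : n → ℂ) : Matrix n n ℂ := fun i j => ψ i * star (ψ j)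

/-- partial trace over the second (B) factor. -/
def ptraceB {a b : Type*} [Fintype b] (ρ : Matrix (a × b) (a × b) ℂ) : Matrix a a ℂ :=
  fun i k => ∑ j, ρ (i, j) (k, j)

/-- partial trace over the first (A) factor. -/
def ptraceA {a b : Type*} [Fintype a] (ρ : Matrix (a × b) (a × b) ℂ) : Matrix b b ℂ :=
  fun j l => ∑ i, ρ (i, j) (i, l)

/-- partial transpose over the first (A) factor, in the canonical product basis. -/
def pt {a b : Type*} (ρ : Matrix (a × b) (a × b) ℂ) : Matrix (a × b) (a × b) ℂ :=
  fun p q => ρ (q.1, p.2) (p.1, q.2)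

/-- logarithmic negativity `E_N(ρ) = log₂ Tr |ρ^{T_A}|`. -/
noncomputable def logNeg {a b : Type*} [Fintype a] [Fintype b] [DecidableEq a] [DecidableEq b]
    (ρ : Matrix (a × b) (a × b) ℂ) : ℝ := Real.logb 2 (traceNorm (pt ρ))


open scoped MatrixOrder in
lemma traceNorm_eq_trace_of_conjTranspose_mul_self_eq {n : Type*} [Fintype n] [DecidableEq n]
    {X T : Matrix n n ℂ} (hT : T.PosSemidef) (h : Xᴴ * X = T * T) : traceNorm X = T.trace.re := by
  have hX := posSemidef_conjTranspose_mul_self X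
  have hsqrt : CFC.sqrt (Xᴴ * X) = T := CFC.sqrt_unique h.symm (nonneg_iff_posSemidef.mpr hT)
  rw [CFC.sqrt_eq_real_sqrt _ hX.nonneg, cfcₙ_eq_cfc (hf0 := Real.sqrt_zero), hX.1.cfc_eq] at hsqrt
  rw [traceNorm, ← hsqrt]
  rfl

section OuterSum

variable {ι n : Type*}

lemma outer_conjTranspose (u v : n → ℂ) : (outer u v)ᴴ = outer v u := by
  ext i j; simp [outer, conjTranspose_apply, mul_comm]

variable [Fintype ι]

def outerSum (W : ι → n → ℂ) (σ : ι → ι) : Matrix n n ℂ := ∑ i, outer (W i) (W (σ i))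

lemma conjTranspose_outerSum {W : ι → n → ℂ} {σ : ι → ι} (hσ : Function.Involutive σ) :
    (outerSum W σ)ᴴ = outerSum W σ := by
  simp only [outerSum, conjTranspose_sum, outer_conjTranspose]
  exact Fintype.sum_equiv hσ.toPerm _ _ fun i => by simp [hσ i]

variable [Fintype n]

lemma outer_mul_outer (u v x y : n → ℂ) : outer u v * outer x y = dotc v x • outer u y := by
  ext i j
  simp only [outer, Matrix.mul_apply, Matrix.smul_apply, dotc, smul_eq_mul, Finset.sum_mul]
  exact Finset.sum_congr rfl fun k _ => by ring

lemma trace_outer (u : n → ℂ) : (outer u u).trace = dotc u u := by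
  simp [Matrix.trace, outer, dotc, mul_comm]

variable [DecidableEq ι] {W : ι → n → ℂ}

lemma outerSum_mul_outerSum (hW : Orthonormal' W) (σ τ : ι → ι) :
    outerSum W σ * outerSum W τ = outerSum W (τ ∘ σ) := by
  simp only [outerSum, Finset.sum_mul, Finset.mul_sum, outer_mul_outer, hW _ _, ite_smul,
    one_smul, zero_smul]
  rw [Finset.sum_comm]
  simp

lemma trace_outerSum_id (hW : Orthonormal' W) : (outerSum W id).trace = Fintype.card ι := by
  simp [outerSum, trace_sum, trace_outer, hW _ _]

lemma posSemidef_outerSum_id (hW : Orthonormal' W) : (outerSum W id).PosSemidef := by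
  have h : (outerSum W id)ᴴ * outerSum W id = outerSum W id := by
    rw [conjTranspose_outerSum fun _ => rfl, outerSum_mul_outerSum hW]; rfl
  exact h ▸ posSemidef_conjTranspose_mul_self _

lemma traceNorm_smul_outerSum [DecidableEq n] (hW : Orthonormal' W) {σ : ι → ι}
    (hσ : Function.Involutive σ) (c : ℂ) :
    traceNorm (c • outerSum W σ) = ‖c‖ * Fintype.card ι := by
  have hT : ((‖c‖ : ℂ) • outerSum W id).PosSemidef :=
    (posSemidef_outerSum_id hW).smul (by positivity)
  have hsq : (c • outerSum W σ)ᴴ * (c • outerSum W σ) =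
      ((‖c‖ : ℂ) • outerSum W id) * ((‖c‖ : ℂ) • outerSum W id) := by
    rw [conjTranspose_smul, conjTranspose_outerSum hσ, smul_mul_smul, smul_mul_smul,
      outerSum_mul_outerSum hW, outerSum_mul_outerSum hW, hσ.comp_self, ← sq, Complex.star_def,
      Complex.conj_mul']
    rfl
  rw [traceNorm_eq_trace_of_conjTranspose_mul_self_eq hT hsq, trace_smul, trace_outerSum_id hW,
    smul_eq_mul]
  norm_cast

end OuterSum

lemma dotc_kvec {a b : Type*} [Fintype a] [Fintype b] (u v : a → ℂ) (x y : b → ℂ) :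
    dotc (kvec u x) (kvec v y) = dotc u v * dotc x y := by
  simp only [dotc, kvec, Fintype.sum_prod_type, Finset.sum_mul_sum, star_mul']
  exact Finset.sum_congr rfl fun i _ => Finset.sum_congr rfl fun j _ => by ring

lemma Orthonormal'.kvec {ι κ a b : Type*} [Fintype a] [Fintype b] [DecidableEq ι] [DecidableEq κ]
    {e : ι → a → ℂ} {f : κ → b → ℂ} (he : Orthonormal' e) (hf : Orthonormal' f) :
    Orthonormal' fun p : ι × κ => _root_.kvec (e p.1) (f p.2) := by
  rintro ⟨i, k⟩ ⟨j, l⟩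
  simp only [dotc_kvec, he _ _, hf _ _, Prod.mk.injEq]
  split_ifs <;> simp_all

def swapFst {μ ν τ : Type*} (p : (μ × ν) × (μ × τ)) : (μ × ν) × (μ × τ) :=
  ((p.2.1, p.1.2), (p.1.1, p.2.2))

lemma sum_kronecker_sum_outer {μ ν τ a b : Type*} [Fintype μ] [Fintype ν] [Fintype τ]
    (e : μ × ν → a → ℂ) (f : μ × τ → b → ℂ) :
    ∑ m, ∑ m', (∑ k, outer (e (m, k)) (e (m', k))) ⊗ₖ (∑ t, outer (f (m', t)) (f (m, t))) =
      outerSum (fun p => kvec (e p.1) (f p.2)) swapFst := by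
  ext ⟨i, j⟩ ⟨k, l⟩
  simp only [outerSum, swapFst, Matrix.sum_apply, kroneckerMap_apply, Finset.sum_mul_sum,
    Fintype.sum_prod_type, outer, kvec, star_mul']
  refine Finset.sum_congr rfl fun m _ => ?_
  rw [Finset.sum_comm]
  exact Finset.sum_congr rfl fun n _ => Finset.sum_congr rfl fun m' _ =>
    Finset.sum_congr rfl fun t _ => by ring

theorem stmt11_general {a b : Type*} [Fintype a] [Fintype b] [DecidableEq a] [DecidableEq b]
    {μmax νmax τmax : ℕ} (hν : 0 < νmax) (hτ : 0 < τmax)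
    (e : Fin μmax × Fin νmax → a → ℂ) (f : Fin μmax × Fin τmax → b → ℂ)
    (he : Orthonormal' e) (hf : Orthonormal' f)
    -- the partial transpose of ρ_{A₁B₁} over A₁, taken in the basis {|e_{μν}⟩}
    (R : Matrix (a × b) (a × b) ℂ)
    (hR : R = ((μmax : ℂ))⁻¹ • ∑ μ, ∑ μ',
        (((νmax : ℂ))⁻¹ • ∑ ν, outer (e (μ, ν)) (e (μ', ν))) ⊗ₖ
          (((τmax : ℂ))⁻¹ • ∑ t, outer (f (μ', t)) (f (μ, t)))) :
    traceNorm R = μmax ∧ Real.logb 2 (traceNorm R) = Real.logb 2 μmax := by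
  have hR' : R = ((μmax : ℂ) * νmax * τmax)⁻¹ •
      outerSum (fun p => kvec (e p.1) (f p.2)) swapFst := by
    rw [hR, ← sum_kronecker_sum_outer]
    simp only [smul_kronecker, kronecker_smul, ← Finset.smul_sum, smul_smul]
    congr 1
    ring
  have htn : traceNorm R = μmax := by
    rw [hR', traceNorm_smul_outerSum (he.kvec hf) fun _ => rfl]
    simp only [Complex.norm_mul, norm_inv, RCLike.norm_natCast, Fintype.card_prod,
      Fintype.card_fin, Nat.cast_mul]
    field_simp
  exact ⟨htn, by rw [htn]⟩

theorem stmt11 {a b : Type*} [Fintype a] [Fintype b] [DecidableEq a] [DecidableEq b]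
    {μmax νmax τmax : ℕ} (hμ : 0 < μmax) (hν : 0 < νmax) (hτ : 0 < τmax)
    (e : Fin μmax × Fin νmax → a → ℂ) (f : Fin μmax × Fin τmax → b → ℂ)
    (he : Orthonormal' e) (hf : Orthonormal' f)
    -- the partial transpose of ρ_{A₁B₁} over A₁, taken in the basis {|e_{μν}⟩}
    (R : Matrix (a × b) (a × b) ℂ)
    (hR : R = ((μmax : ℂ))⁻¹ • ∑ μ, ∑ μ',
        (((νmax : ℂ))⁻¹ • ∑ ν, outer (e (μ, ν)) (e (μ', ν))) ⊗ₖ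
          (((τmax : ℂ))⁻¹ • ∑ t, outer (f (μ', t)) (f (μ, t)))) :
    traceNorm R = μmax ∧ Real.logb 2 (traceNorm R) = Real.logb 2 μmax :=
  stmt11_general hν hτ e f he hf R hR
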